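/- arXiv:math/0312100 — 3 statements merged into one kernel-verified Lean document; each statement's English description precedes it below -/
import Mathlib

section
/- For every integer k ≥ 1, the identity d/du ( R(u)^k · Σ_{j=0}^{k} c_{k,j}·u^j ) = R(u)^{k−2} · Σ_{j=0}^{k} q_{k,j}·u^j holds in ℚ[[u]]. -/
/-!
Write `P = ∑ c_{k,j} uʲ` and `Q = ∑ q_{k,j} uʲ`. The relation defining `c` says coefficientwise
that `Q = 2k·P + (1 + 4u)·P'`. Differentiating `R² = 1 + 4u` gives `R·R' = 2`, hence
`(Rᵏ P)' = R^{k-2}·(k·R R'·P + R²·P') = R^{k-2}·(2k·P + (1 + 4u)·P') = R^{k-2}·Q`.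
-/

open PowerSeries Finset

/-- `q : ℕ → ℕ → ℤ` satisfies the defining recursion. -/
def IsQ (q : ℕ → ℕ → ℤ) : Prop :=
  q 0 0 = 1 ∧
  (∀ k j, k < j → q k j = 0) ∧
  (∀ k j, 1 ≤ k → j ≤ k →
    q k j = (2 * (k : ℤ) + 4 * (j : ℤ) - 2) * (if j = 0 then 0 else q (k - 1) (j - 1))
      + ((j : ℤ) + 1) * q (k - 1) j
      + ∑ m ∈ Finset.range k, ∑ l ∈ Finset.range j, q m l * q (k - 1 - m) (j - 1 - l))

/-- `c : ℕ → ℕ → ℚ` satisfies the defining relations: `c k j = 0` for `j > k`, and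
`q k j = (2k+4j)·c k j + (j+1)·c k (j+1)` for all `k ≥ 1` and `0 ≤ j ≤ k`. -/
def IsC (q : ℕ → ℕ → ℤ) (c : ℕ → ℕ → ℚ) : Prop :=
  (∀ k j, k < j → c k j = 0) ∧
  (∀ k j, 1 ≤ k → j ≤ k →
    (q k j : ℚ) = (2 * (k : ℚ) + 4 * (j : ℚ)) * c k j + ((j : ℚ) + 1) * c k (j + 1))

theorem PowerSeries.sum_range_C_mul_X_pow_eq_mk {R : Type*} [CommSemiring R] (a : ℕ → R) (k : ℕ) :
    ∑ j ∈ range (k + 1), C (a j) * X ^ j = mk fun n ↦ if n ≤ k then a n else 0 := by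
  ext n
  simp [coeff_X_pow]

theorem PowerSeries.derivative_pow_mul {K : Type*} [Field K] {R : K⟦X⟧}
    (hR : constantCoeff R ≠ 0) (k : ℕ) (P : K⟦X⟧) :
    d⁄dX K (R ^ k * P) = R ^ k * R⁻¹ ^ 2 * (k * (R * d⁄dX K R) * P + R ^ 2 * d⁄dX K P) := by
  have hRR : R * R⁻¹ = 1 := PowerSeries.mul_inv_cancel R hR
  rw [Derivation.leibniz, Derivation.leibniz_pow, smul_eq_mul, smul_eq_mul, nsmul_eq_mul]
  rcases k with _ | m
  · simp only [pow_zero, one_mul, Nat.cast_zero, zero_mul, zero_add, mul_zero, add_zero]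
    linear_combination (-(1 + R * R⁻¹) * d⁄dX K P) * hRR
  · push_cast
    linear_combination
      (-(1 + R * R⁻¹) * (R ^ (m + 1) * d⁄dX K P + (m + 1) * R ^ m * d⁄dX K R * P)) * hRR

theorem PowerSeries.mul_derivative_eq_two_of_sq_eq {K : Type*} [Field K] [CharZero K] {R : K⟦X⟧}
    (hR : R ^ 2 = 1 + 4 * X) : R * d⁄dX K R = 2 := by
  have h := congrArg (d⁄dX K) hR
  rw [derivative_pow, map_add, derivative_one, ← map_ofNat C 4, Derivation.leibniz, derivative_C,
    derivative_X, map_ofNat] at h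
  have h2 : (2 : K⟦X⟧) ≠ 0 := by
    rw [← map_ofNat C 2]
    exact (map_ne_zero_iff C C_injective).mpr two_ne_zero
  apply mul_left_cancel₀ h2
  simp only [smul_eq_mul] at h
  linear_combination h

theorem PowerSeries.mk_eq_C_mul_add_derivative {K : Type*} [CommRing K] (s : K) (a b : ℕ → K)
    (hb : ∀ n, b n = (s + 4 * n) * a n + (n + 1) * a (n + 1)) :
    mk b = C s * mk a + (1 + 4 * X) * d⁄dX K (mk a) := by
  ext n
  have hXD : coeff n (X * d⁄dX K (mk a)) = n * a n := by
    rcases n with _ | n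
    · simp
    · rw [coeff_succ_X_mul, coeff_derivative, coeff_mk]
      push_cast
      ring
  rw [add_mul, one_mul, ← map_ofNat C 4, mul_assoc, map_add, map_add, coeff_C_mul, coeff_C_mul,
    hXD, coeff_derivative, coeff_mk, coeff_mk, coeff_mk, hb]
  ring

theorem IsC.coeff_relation {q : ℕ → ℕ → ℤ} {c : ℕ → ℕ → ℚ} (hc : IsC q c) {k : ℕ} (hk : 1 ≤ k)
    (n : ℕ) :
    (if n ≤ k then (q k n : ℚ) else 0) = (2 * k + 4 * n) * c k n + (n + 1) * c k (n + 1) := by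
  split_ifs with h
  · exact hc.2 k n hk h
  · rw [hc.1 k n (by omega), hc.1 k (n + 1) (by omega)]
    ring

theorem statement6_general (q : ℕ → ℕ → ℤ) (c : ℕ → ℕ → ℚ) (hc : IsC q c)
    (R : PowerSeries ℚ) (hR2 : R ^ 2 = 1 + 4 * PowerSeries.X) :
    ∀ k : ℕ, 1 ≤ k →
      d⁄dX ℚ (R ^ k * ∑ j ∈ Finset.range (k + 1),
          PowerSeries.C (c k j) * PowerSeries.X ^ j) =
        R ^ k * (R⁻¹) ^ 2 * ∑ j ∈ Finset.range (k + 1),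
          PowerSeries.C ((q k j : ℚ)) * PowerSeries.X ^ j := by
  intro k hk
  have hR : constantCoeff R ≠ 0 := by
    intro h0
    simpa [h0] using congrArg constantCoeff hR2
  have hc_mk : (mk fun n ↦ if n ≤ k then c k n else 0) = mk (c k) := by
    ext n
    simp only [coeff_mk, ite_eq_left_iff, not_le]
    exact fun h ↦ (hc.1 k n h).symm
  rw [sum_range_C_mul_X_pow_eq_mk, sum_range_C_mul_X_pow_eq_mk, hc_mk, derivative_pow_mul hR,
    mul_derivative_eq_two_of_sq_eq hR2, hR2,
    mk_eq_C_mul_add_derivative (2 * (k : ℚ)) _ _ (hc.coeff_relation hk)]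
  simp only [map_mul, map_ofNat, map_natCast]
  ring

/-- For every integer `k ≥ 1`, `d/du (R(u)ᵏ · ∑_{j=0}^{k} c_{k,j} uʲ) =
R(u)^{k-2} · ∑_{j=0}^{k} q_{k,j} uʲ` in `ℚ⟦u⟧`, where `R(u)` is the unique square
root of `1+4u` with constant term `1` (and `R^{k-2}` is written `Rᵏ·(R⁻¹)²`). -/
theorem statement6 (q : ℕ → ℕ → ℤ) (hq : IsQ q) (c : ℕ → ℕ → ℚ) (hc : IsC q c)
    (R : PowerSeries ℚ) (hR0 : PowerSeries.constantCoeff R = 1)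
    (hR2 : R ^ 2 = 1 + 4 * PowerSeries.X) :
    ∀ k : ℕ, 1 ≤ k →
      d⁄dX ℚ (R ^ k * ∑ j ∈ Finset.range (k + 1),
          PowerSeries.C (c k j) * PowerSeries.X ^ j) =
        R ^ k * (R⁻¹) ^ 2 * ∑ j ∈ Finset.range (k + 1),
          PowerSeries.C ((q k j : ℚ)) * PowerSeries.X ^ j :=
  statement6_general q c hc R hR2
end

section
/- For every integer a ≥ 1, 10·c_{a,a−1} = a·c_{a,a}. -/
open Finset

/-!
Write `D k = q k k` and `E k = q (k+1) k`. Since `q` vanishes above the diagonal, the recursion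
restricted to these two diagonals reads `D (k+1) = (6k+4) D k + ∑_{i+j=k} D i D j` and
`E (k+1) = (6k+6) E k + (k+2) D (k+1) + 2 ∑_{i+j=k} E i D j`. Strong induction gives
`10 E k = (k+2) D (k+1)`: the hypothesis turns `10 ∑ E i D j` into `∑ (i+2) D (i+1) D j`, a weighted
self-convolution of `D`, and by the symmetry `i ↔ j` such a weight `i` may be replaced by `(i+j)/2`,
which brings everything back to the recursion for `D`. The claim about `c` is then linear algebra
on the two rows `j = a` and `j = a-1` of its defining relation.
-/

namespace Finset.Nat

theorem two_mul_sum_antidiagonal_fst_mul {R : Type*} [CommSemiring R] (f : ℕ → R) (n : ℕ) :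
    2 * ∑ p ∈ antidiagonal n, (p.1 : R) * (f p.1 * f p.2)
      = n * ∑ p ∈ antidiagonal n, f p.1 * f p.2 := by
  have hswap : ∑ p ∈ antidiagonal n, (p.1 : R) * (f p.1 * f p.2)
      = ∑ p ∈ antidiagonal n, (p.2 : R) * (f p.1 * f p.2) := by
    rw [← sum_antidiagonal_swap]
    exact sum_congr rfl fun p _ => by rw [Prod.fst_swap, Prod.snd_swap, mul_comm (f p.2)]
  calc 2 * ∑ p ∈ antidiagonal n, (p.1 : R) * (f p.1 * f p.2)
      = ∑ p ∈ antidiagonal n, ((p.1 + p.2 : ℕ) : R) * (f p.1 * f p.2) := by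
        rw [two_mul]; nth_rewrite 2 [hswap]
        rw [← sum_add_distrib]; push_cast; simp only [add_mul]
    _ = n * ∑ p ∈ antidiagonal n, f p.1 * f p.2 := by
        rw [mul_sum]; exact sum_congr rfl fun p hp => by rw [mem_antidiagonal.mp hp]

end Finset.Nat

namespace IsQ

variable {q : ℕ → ℕ → ℤ}

theorem diag_succ (hq : IsQ q) (k : ℕ) :
    q (k + 1) (k + 1) = (6 * k + 4) * q k k + ∑ p ∈ antidiagonal k, q p.1 p.1 * q p.2 p.2 := by
  have hrec := hq.2.2 (k + 1) (k + 1) (by omega) le_rfl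
  simp only [Nat.add_sub_cancel, if_neg (Nat.succ_ne_zero k), hq.2.1 k (k + 1) (by omega),
    mul_zero, add_zero] at hrec
  -- only `l = m` survives in the inner sum, since `q` vanishes above the diagonal
  have hinner : ∀ m ∈ range (k + 1),
      ∑ l ∈ range (k + 1), q m l * q (k - m) (k - l) = q m m * q (k - m) (k - m) := by
    intro m hm
    refine sum_eq_single_of_mem m hm fun l hl hlm => ?_
    rcases lt_or_gt_of_ne hlm with h | h
    · rw [hq.2.1 (k - m) (k - l) (by simp at hl hm; omega), mul_zero]
    · rw [hq.2.1 m l h, zero_mul]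
  rw [hrec, sum_congr rfl hinner, Nat.sum_antidiagonal_eq_sum_range_succ (fun i j => q i i * q j j)]
  push_cast
  ring

theorem subdiag_succ (hq : IsQ q) (k : ℕ) :
    q (k + 2) (k + 1) = (6 * k + 6) * q (k + 1) k + (k + 2) * q (k + 1) (k + 1)
      + 2 * ∑ p ∈ antidiagonal k, q (p.1 + 1) p.1 * q p.2 p.2 := by
  have hrec := hq.2.2 (k + 2) (k + 1) (by omega) (by omega)
  simp only [Nat.add_sub_cancel, if_neg (Nat.succ_ne_zero k), show k + 2 - 1 = k + 1 from rfl]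
    at hrec
  -- only `m = l` and `m = l + 1` survive in the sum over `m`
  have hinner : ∀ l ∈ range (k + 1), ∑ m ∈ range (k + 2), q m l * q (k + 1 - m) (k - l)
      = q l l * q (k - l + 1) (k - l) + q (l + 1) l * q (k - l) (k - l) := by
    intro l hl
    simp only [mem_range] at hl
    have hpair : ({l, l + 1} : Finset ℕ) ⊆ range (k + 2) := by
      intro x hx; simp only [mem_insert, mem_singleton] at hx; simp only [mem_range]; omega
    rw [← sum_subset hpair, sum_pair (by omega), show k + 1 - l = k - l + 1 by omega,
      show k + 1 - (l + 1) = k - l by omega]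
    intro m hm hml
    simp only [mem_range] at hm
    simp only [mem_insert, mem_singleton, not_or] at hml
    rcases lt_or_gt_of_ne hml.1 with h | h
    · rw [hq.2.1 m l h, zero_mul]
    · rw [hq.2.1 (k + 1 - m) (k - l) (by omega), mul_zero]
  have hsymm : ∑ p ∈ antidiagonal k, q p.1 p.1 * q (p.2 + 1) p.2
      = ∑ p ∈ antidiagonal k, q (p.1 + 1) p.1 * q p.2 p.2 := by
    rw [← Nat.sum_antidiagonal_swap]
    exact sum_congr rfl fun p _ => mul_comm _ _
  rw [hrec, sum_comm, sum_congr rfl hinner,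
    ← Nat.sum_antidiagonal_eq_sum_range_succ
      (fun i j => q i i * q (j + 1) j + q (i + 1) i * q j j), sum_add_distrib, hsymm]
  push_cast
  ring

theorem ten_mul_subdiag (hq : IsQ q) (k : ℕ) : 10 * q (k + 1) k = (k + 2) * q (k + 1) (k + 1) := by
  induction k using Nat.strong_induction_on with
  | _ k ih =>
  cases k with
  | zero =>
    have h10 : q 1 0 = 1 := by simpa [hq.1] using hq.2.2 1 0 le_rfl (Nat.zero_le 1)
    simp [hq.diag_succ 0, h10, hq.1]
  | succ k =>
    have hconv : 10 * ∑ p ∈ antidiagonal k, q (p.1 + 1) p.1 * q p.2 p.2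
        = ∑ p ∈ antidiagonal k, ((p.1 : ℤ) + 2) * q (p.1 + 1) (p.1 + 1) * q p.2 p.2 := by
      rw [mul_sum]
      refine sum_congr rfl fun p hp => ?_
      have hp1 : p.1 < k + 1 := by have := mem_antidiagonal.mp hp; omega
      rw [← mul_assoc, ih p.1 hp1]
    have hshift : ∑ p ∈ antidiagonal (k + 1), (p.1 : ℤ) * (q p.1 p.1 * q p.2 p.2)
          + ∑ p ∈ antidiagonal (k + 1), q p.1 p.1 * q p.2 p.2
        = q (k + 1) (k + 1)
          + ∑ p ∈ antidiagonal k, ((p.1 : ℤ) + 2) * q (p.1 + 1) (p.1 + 1) * q p.2 p.2 := by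
      rw [← sum_add_distrib, Nat.sum_antidiagonal_succ]
      simp only [hq.1]
      push_cast
      ring_nf
    have hsymm := Nat.two_mul_sum_antidiagonal_fst_mul (fun i => q i i) (k + 1)
    have hdiag := hq.diag_succ (k + 1)
    push_cast at hsymm hdiag ⊢
    linear_combination 10 * hq.subdiag_succ k + (6 * (k : ℤ) + 6) * ih k (Nat.lt_succ_self k)
      + 2 * hconv - 2 * hshift + hsymm - ((k : ℤ) + 3) * hdiag

end IsQ

/-- For every integer `a ≥ 1`, `10·c_{a,a-1} = a·c_{a,a}`. -/
theorem statement13 (q : ℕ → ℕ → ℤ) (hq : IsQ q) (c : ℕ → ℕ → ℚ) (hc : IsC q c) :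
    ∀ a : ℕ, 1 ≤ a → 10 * c a (a - 1) = (a : ℚ) * c a a := by
  intro a ha
  obtain ⟨b, rfl⟩ : ∃ b, a = b + 1 := ⟨a - 1, by omega⟩
  have hdiag := hc.2 (b + 1) (b + 1) (by omega) le_rfl
  have hsubdiag := hc.2 (b + 1) b (by omega) (by omega)
  have hqc : 10 * (q (b + 1) b : ℚ) = ((b : ℚ) + 2) * q (b + 1) (b + 1) := by
    exact_mod_cast hq.ten_mul_subdiag b
  rw [hc.1 (b + 1) (b + 1 + 1) (by omega)] at hdiag
  rw [Nat.add_sub_cancel]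
  apply mul_left_cancel₀ (show (6 * (b : ℚ) + 2) ≠ 0 by positivity)
  push_cast at hdiag hsubdiag ⊢
  linear_combination -10 * hsubdiag + hqc + ((b : ℚ) + 2) * hdiag
end

section
/- The diagonal generating function S(z) := Σ_{k≥0} q_{k,k}·z^k ∈ ℚ[[z]] satisfies the differential equation S = 1 + 6z²·S′ + 4z·S + z·S², where S′ denotes the formal derivative of S. -/
open PowerSeries Finset

namespace IsQ

variable {q : ℕ → ℕ → ℤ}

-- `q` vanishes above the diagonal, so the double convolution collapses to its terms with `l = m`.
theorem diag_succ_s14 (hq : IsQ q) (n : ℕ) :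
    q (n + 1) (n + 1) =
      (6 * n + 4) * q n n + ∑ m ∈ range (n + 1), q m m * q (n - m) (n - m) := by
  obtain ⟨-, hzero, hrec⟩ := hq
  have hconv : ∀ m ∈ range (n + 1),
      ∑ l ∈ range (n + 1), q m l * q (n - m) (n - l) = q m m * q (n - m) (n - m) := by
    intro m hm
    have hmn : m ≤ n := Nat.lt_succ_iff.mp (mem_range.mp hm)
    refine sum_eq_single_of_mem m hm fun l _ hlm => ?_
    rcases lt_or_gt_of_ne hlm with hlt | hgt
    · rw [hzero (n - m) (n - l) (by omega), mul_zero]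
    · rw [hzero m l hgt, zero_mul]
  rw [hrec (n + 1) (n + 1) (by omega) le_rfl]
  simp only [Nat.add_sub_cancel, Nat.succ_ne_zero, if_false, hzero n (n + 1) n.lt_succ_self,
    sum_congr rfl hconv]
  push_cast
  ring

end IsQ

namespace PowerSeries

variable {R : Type*} [CommRing R]

theorem coeff_X_mul_derivative (f : R⟦X⟧) (n : ℕ) :
    coeff n (X * d⁄dX R f) = n * coeff n f := by
  cases n with
  | zero => simp [coeff_zero_eq_constantCoeff]
  | succ n =>
    rw [coeff_succ_X_mul, coeff_derivative]
    push_cast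
    ring

theorem mk_eq_riccati_of_rec (a : ℕ → R) (h0 : a 0 = 1)
    (hrec : ∀ n, a (n + 1) = (6 * n + 4) * a n + ∑ m ∈ range (n + 1), a m * a (n - m)) :
    mk a = 1 + 6 * X ^ 2 * d⁄dX R (mk a) + 4 * X * mk a + X * mk a ^ 2 := by
  set S := mk a
  have hX : 1 + 6 * X ^ 2 * d⁄dX R S + 4 * X * S + X * S ^ 2 =
      1 + X * (C 6 * (X * d⁄dX R S) + C 4 * S + S * S) := by
    simp only [map_ofNat]; ring
  rw [hX]
  ext n
  cases n with
  | zero => simp [S, h0]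
  | succ n =>
    rw [map_add, coeff_one, if_neg n.succ_ne_zero, zero_add, coeff_succ_X_mul, map_add, map_add,
      coeff_C_mul, coeff_C_mul, coeff_X_mul_derivative, coeff_mul,
      Nat.sum_antidiagonal_eq_sum_range_succ_mk]
    simp only [S, coeff_mk, hrec]
    ring

end PowerSeries

/-- The diagonal generating function `S(z) := ∑_{k≥0} q_{k,k} zᵏ ∈ ℚ⟦z⟧` satisfies the
differential equation `S = 1 + 6z²·S′ + 4z·S + z·S²`. -/
theorem statement14 (q : ℕ → ℕ → ℤ) (hq : IsQ q)
    (S : PowerSeries ℚ) (hS : S = PowerSeries.mk fun k => (q k k : ℚ)) :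
    S = 1 + 6 * PowerSeries.X ^ 2 * (d⁄dX ℚ S) + 4 * PowerSeries.X * S +
        PowerSeries.X * S ^ 2 := by
  subst hS
  refine mk_eq_riccati_of_rec _ (by simp [hq.1]) fun n => ?_
  exact_mod_cast hq.diag_succ_s14 n
end
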